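/- Let (B_t)_{t∈G} be a concrete Fell bundle over a group G in a C*-algebra L and let (X_t)_{t∈G} be a concrete right Hilbert (B_t)-bundle. If (X_t) is strongly full, i.e. X_t*⋅X_t = B_t*⋅B_t for every t ∈ G, then X_r*⋅X_s = B_r*⋅B_s for all r, s ∈ G. -/

import Mathlib

/-- The closed linear span (over `ℂ`) of a set in a normed `ℂ`-algebra. -/
noncomputable def closedSpan {L : Type*} [NormedRing L] [NormedAlgebra ℂ L]
    (S : Set L) : Submodule ℂ L :=
  (Submodule.span ℂ S).topologicalClosure

/-- `S⋅T`: the closed linear span of all products `s * t` with `s ∈ S`, `t ∈ T`. -/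
noncomputable def mulSpan {L : Type*} [NormedRing L] [NormedAlgebra ℂ L]
    (S T : Set L) : Submodule ℂ L :=
  closedSpan (Set.image2 (· * ·) S T)

/-!
Every `Y = X r` (and every `Y = B s`) satisfies `Y ⋅ Y* ⋅ Y ⊆ Y`, and for such a `Y` one has
`Y ⊆ Y ⋅ (Y*⋅Y)`: for `‖y‖ ≤ 1` the elements `1 - (1 - y*y)ⁿ` lie in `Y*⋅Y`, and
`‖y (1 - y*y)ⁿ‖² = ‖y*y (1 - y*y)²ⁿ‖ ≤ 1/(2n+1)` by the continuous functional calculus.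
Taking adjoints, `X r* ⊆ (X r*⋅X r)⋅X r* = (B r*⋅B r)⋅X r*`, so
`X r*⋅X s ⊆ B r*⋅(B r⋅X r*⋅X s) ⊆ B r*⋅B s`. The same computation with `X` and `B` exchanged
gives `B s*⋅B r ⊆ X s*⋅X r`, whose adjoint is the reverse inclusion.
-/

open Filter Topology

section MulSpan

variable {L : Type*} [NormedRing L] [NormedAlgebra ℂ L]

lemma subset_closedSpan (S : Set L) : S ⊆ closedSpan S :=
  Submodule.subset_span.trans (Submodule.le_topologicalClosure _)

lemma isClosed_closedSpan (S : Set L) : IsClosed (closedSpan S : Set L) :=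
  Submodule.isClosed_topologicalClosure _

lemma closedSpan_le {S : Set L} {W : Submodule ℂ L} (hW : IsClosed (W : Set L))
    (h : S ⊆ W) : closedSpan S ≤ W :=
  Submodule.topologicalClosure_minimal _ (Submodule.span_le.mpr h) hW

lemma isClosed_mulSpan (S T : Set L) : IsClosed (mulSpan S T : Set L) :=
  isClosed_closedSpan _

lemma mul_mem_mulSpan {S T : Set L} {s t : L} (hs : s ∈ S) (ht : t ∈ T) :
    s * t ∈ mulSpan S T :=
  subset_closedSpan _ (Set.mem_image2_of_mem hs ht)

lemma mulSpan_le {S T : Set L} {W : Submodule ℂ L} (hW : IsClosed (W : Set L))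
    (h : ∀ s ∈ S, ∀ t ∈ T, s * t ∈ W) : mulSpan S T ≤ W :=
  closedSpan_le hW (Set.image2_subset_iff.mpr h)

lemma mulSpan_mono {S S' T T' : Set L} (hS : S ⊆ S') (hT : T ⊆ T') :
    mulSpan S T ≤ mulSpan S' T' :=
  mulSpan_le (isClosed_mulSpan S' T') fun _ hs _ ht => mul_mem_mulSpan (hS hs) (hT ht)

lemma mulSpan_closedSpan_left (S T : Set L) :
    mulSpan (closedSpan S) T = mulSpan S T := by
  refine le_antisymm (mulSpan_le (isClosed_mulSpan S T) fun s hs t ht => ?_)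
    (mulSpan_mono (subset_closedSpan S) le_rfl)
  have hcl : IsClosed ((mulSpan S T).comap (LinearMap.mulRight ℂ t) : Set L) :=
    (isClosed_mulSpan S T).preimage (continuous_mul_const t)
  exact closedSpan_le hcl (fun s' hs' => mul_mem_mulSpan hs' ht) hs

lemma mulSpan_closedSpan_right (S T : Set L) :
    mulSpan S (closedSpan T) = mulSpan S T := by
  refine le_antisymm (mulSpan_le (isClosed_mulSpan S T) fun s hs t ht => ?_)
    (mulSpan_mono le_rfl (subset_closedSpan T))
  have hcl : IsClosed ((mulSpan S T).comap (LinearMap.mulLeft ℂ s) : Set L) :=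
    (isClosed_mulSpan S T).preimage (continuous_const_mul s)
  exact closedSpan_le hcl (fun t' ht' => mul_mem_mulSpan hs ht') ht

lemma mulSpan_mulSpan_left (S T U : Set L) :
    mulSpan (mulSpan S T) U = mulSpan (Set.image2 (· * ·) S T) U :=
  mulSpan_closedSpan_left _ _

lemma mulSpan_mulSpan_right (S T U : Set L) :
    mulSpan S (mulSpan T U) = mulSpan S (Set.image2 (· * ·) T U) :=
  mulSpan_closedSpan_right _ _

lemma mulSpan_assoc (S T U : Set L) :
    mulSpan (mulSpan S T) U = mulSpan S (mulSpan T U) := by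
  rw [mulSpan_mulSpan_left, mulSpan_mulSpan_right, mulSpan, mulSpan, Set.image2_assoc mul_assoc]

lemma mulSpan_mulSpan_le {S T U : Set L} {W : Submodule ℂ L} (hW : IsClosed (W : Set L))
    (h : ∀ s ∈ S, ∀ t ∈ T, ∀ u ∈ U, s * (t * u) ∈ W) : mulSpan S (mulSpan T U) ≤ W := by
  rw [mulSpan_mulSpan_right]
  exact mulSpan_le hW (by rintro s hs _ ⟨t, ht, u, hu, rfl⟩; exact h s hs t ht u hu)

lemma mul_mem_mulSpan_star_self [Star L] {Y : Submodule ℂ L}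
    (hY : ∀ x ∈ Y, ∀ y ∈ Y, ∀ z ∈ Y, x * (star y * z) ∈ Y) {c c' : L}
    (hc : c ∈ mulSpan (star '' Y) Y) (hc' : c' ∈ mulSpan (star '' Y) Y) :
    c * c' ∈ mulSpan (star '' Y) Y := by
  refine (?_ : mulSpan _ _ ≤ _) (mul_mem_mulSpan hc hc')
  rw [mulSpan_mulSpan_left, mulSpan_mulSpan_right]
  refine mulSpan_le (isClosed_mulSpan _ _) ?_
  rintro _ ⟨_, ⟨u, hu, rfl⟩, v, hv, rfl⟩ _ ⟨_, ⟨u', hu', rfl⟩, v', hv', rfl⟩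
  rw [mul_assoc]
  exact mul_mem_mulSpan ⟨u, hu, rfl⟩ (hY v hv u' hu' v' hv')

end MulSpan

section Star

variable {L : Type*} [NormedRing L] [StarRing L] [NormedAlgebra ℂ L] [StarModule ℂ L]
  [ContinuousStar L]

lemma star_image_closedSpan (S : Set L) :
    star '' (closedSpan S : Set L) = closedSpan (star '' S) := by
  have h1 : star '' closure (Submodule.span ℂ S : Set L)
      = closure (star '' (Submodule.span ℂ S : Set L)) :=
    (starL ℂ : L ≃L⋆[ℂ] L).toHomeomorph.image_closure _
  have h2 : star '' (Submodule.span ℂ S : Set L) = Submodule.span ℂ (star '' S) :=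
    congrArg SetLike.coe (Submodule.map_span (starLinearEquiv ℂ : L ≃ₗ⋆[ℂ] L).toLinearMap S)
  rw [closedSpan, Submodule.topologicalClosure_coe, h1, h2]
  rfl

lemma star_image_mulSpan (S T : Set L) :
    star '' (mulSpan S T : Set L) = mulSpan (star '' T) (star '' S) := by
  rw [mulSpan, star_image_closedSpan, mulSpan, Set.image_image2_antidistrib star_mul]

lemma star_image_mulSpan_star (S T : Set L) :
    star '' (mulSpan (star '' S) T : Set L) = mulSpan (star '' T) S := by
  rw [star_image_mulSpan, Set.image_image]
  simp only [star_star, Set.image_id']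

end Star

lemma one_sub_one_sub_pow_mem {R : Type*} [Ring R] (C : AddSubgroup R)
    (hC : ∀ c ∈ C, ∀ c' ∈ C, c * c' ∈ C) {a : R} (ha : a ∈ C) (n : ℕ) :
    1 - (1 - a) ^ n ∈ C := by
  induction n with
  | zero => simp
  | succ n ih =>
    have h : 1 - (1 - a) ^ (n + 1) = 1 - (1 - a) ^ n + (a - (1 - (1 - a) ^ n) * a) := by
      noncomm_ring
    rw [h]
    exact C.add_mem ih (C.sub_mem ha (hC _ ih _ ha))

lemma mul_one_sub_pow_le {u : ℝ} (h0 : 0 ≤ u) (h1 : u ≤ 1) (n : ℕ) :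
    u * (1 - u) ^ n ≤ 1 / (n + 1) := by
  have hbern : (1 + n * u) * (1 - u) ^ n ≤ 1 :=
    calc (1 + n * u) * (1 - u) ^ n ≤ (1 + u) ^ n * (1 - u) ^ n :=
          mul_le_mul_of_nonneg_right (one_add_mul_le_pow (by linarith) n)
            (pow_nonneg (by linarith) n)
      _ = (1 - u ^ 2) ^ n := by rw [← mul_pow]; ring
      _ ≤ 1 := pow_le_one₀ (by nlinarith) (by nlinarith)
  rw [le_div_iff₀ (by positivity)]
  nlinarith [pow_nonneg (sub_nonneg.mpr h1) n]

section CStarAlgebra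

variable {A : Type*} [CStarAlgebra A]

lemma cfc_mul_one_sub_pow (a : A) (ha : IsSelfAdjoint a) (n : ℕ) :
    cfc (fun x : ℝ => x * (1 - x) ^ n) a = a * (1 - a) ^ n := by
  rw [cfc_mul _ _ a, cfc_pow _ n a, cfc_sub _ _ a, cfc_const_one ℝ a, cfc_id' ℝ a]

lemma norm_star_mul_self_mul_one_sub_pow_le {y : A} (hy : ‖y‖ ≤ 1) (n : ℕ) :
    ‖star y * y * (1 - star y * y) ^ n‖ ≤ 1 / (n + 1) := by
  rw [← cfc_mul_one_sub_pow _ (.star_mul_self y)]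
  refine norm_cfc_le (by positivity) fun x hx => ?_
  have hx0 : 0 ≤ x := spectrum_star_mul_self_nonneg x hx
  have hx1 : x ≤ 1 := by
    obtain hA | hA := subsingleton_or_nontrivial A
    · simp [spectrum.of_subsingleton] at hx
    have := spectrum.norm_le_norm_of_mem hx
    rw [CStarRing.norm_star_mul_self, Real.norm_of_nonneg hx0] at this
    nlinarith [norm_nonneg y]
  rw [Real.norm_of_nonneg (mul_nonneg hx0 (pow_nonneg (by linarith) n))]
  exact mul_one_sub_pow_le hx0 hx1 n

lemma tendsto_mul_one_sub_star_mul_self_pow {y : A} (hy : ‖y‖ ≤ 1) :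
    Tendsto (fun n : ℕ => y * (1 - star y * y) ^ n) atTop (𝓝 0) := by
  set d := 1 - star y * y
  have hsq : ∀ n : ℕ, ‖y * d ^ n‖ ^ 2 = ‖star y * y * d ^ (2 * n)‖ := by
    intro n
    have hd : IsSelfAdjoint d := .sub (.one A) (.star_mul_self y)
    have hcomm : Commute (d ^ n) (star y * y) :=
      ((Commute.one_left _).sub_left (Commute.refl _)).pow_left n
    calc ‖y * d ^ n‖ ^ 2 = ‖d ^ n * (star y * y) * d ^ n‖ := by
          rw [sq, ← CStarRing.norm_star_mul_self, star_mul, star_pow, hd.star_eq]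
          simp only [mul_assoc]
      _ = ‖star y * y * d ^ (2 * n)‖ := by rw [hcomm.eq, mul_assoc, ← pow_add, two_mul]
  have hbound : ∀ n : ℕ, ‖y * d ^ n‖ ^ 2 ≤ 1 / (n + 1) := fun n =>
    calc ‖y * d ^ n‖ ^ 2 ≤ 1 / ((2 * n : ℕ) + 1) :=
          (hsq n).trans_le (norm_star_mul_self_mul_one_sub_pow_le hy _)
      _ ≤ 1 / (n + 1) := by gcongr; linarith
  have hsq0 : Tendsto (fun n : ℕ => ‖y * d ^ n‖ ^ 2) atTop (𝓝 0) :=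
    squeeze_zero (fun _ => by positivity) hbound tendsto_one_div_add_atTop_nhds_zero_nat
  rw [tendsto_zero_iff_norm_tendsto_zero]
  simpa using hsq0.sqrt

lemma subset_mulSpan_mulSpan_star_self {Y : Submodule ℂ A}
    (hY : ∀ x ∈ Y, ∀ y ∈ Y, ∀ z ∈ Y, x * (star y * z) ∈ Y) :
    (Y : Set A) ⊆ mulSpan Y (mulSpan (star '' (Y : Set A)) Y : Set A) := by
  set C := mulSpan (star '' (Y : Set A)) Y
  have hball : ∀ y ∈ Y, ‖y‖ ≤ 1 → y ∈ mulSpan Y C := by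
    intro y hy hy1
    have hmem : ∀ n : ℕ, y * (1 - (1 - star y * y) ^ n) ∈ mulSpan Y C := fun n =>
      mul_mem_mulSpan hy <| one_sub_one_sub_pow_mem C.toAddSubgroup
        (fun _ hc _ hc' => mul_mem_mulSpan_star_self hY hc hc')
        (mul_mem_mulSpan (Set.mem_image_of_mem star hy) hy) n
    have hlim : Tendsto (fun n : ℕ => y * (1 - (1 - star y * y) ^ n)) atTop (𝓝 y) := by
      simpa only [mul_sub, mul_one, sub_zero] using
        (tendsto_mul_one_sub_star_mul_self_pow hy1).const_sub y
    exact (isClosed_mulSpan _ _).mem_of_tendsto hlim (.of_forall hmem)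
  intro y hy
  have ht : ((‖y‖ + 1 : ℝ) : ℂ) ≠ 0 := by exact_mod_cast (by positivity : ‖y‖ + 1 ≠ 0)
  have hscaled : ((‖y‖ + 1 : ℝ) : ℂ)⁻¹ • y ∈ mulSpan Y C := by
    refine hball _ (Y.smul_mem _ hy) ?_
    rw [norm_smul, norm_inv, Complex.norm_of_nonneg (by positivity)]
    exact inv_mul_le_one_of_le₀ (by linarith) (by positivity)
  exact (Submodule.smul_mem_iff _ (inv_ne_zero ht)).mp hscaled

lemma mulSpan_star_le_mulSpan_star {P Q S : Submodule ℂ A} {R : Set A}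
    (hS : IsClosed (S : Set A)) (hP : ∀ x ∈ P, ∀ y ∈ P, ∀ z ∈ P, x * (star y * z) ∈ P)
    (hPQ : mulSpan (star '' (P : Set A)) P = mulSpan (star '' (Q : Set A)) Q)
    (hQ : ∀ q ∈ Q, ∀ p ∈ P, ∀ x ∈ R, q * (star p * x) ∈ S) :
    mulSpan (star '' (P : Set A)) R ≤ mulSpan (star '' (Q : Set A)) S := by
  set P' := star '' (P : Set A)
  set Q' := star '' (Q : Set A)
  have hP' : P' ⊆ mulSpan (mulSpan P' P : Set A) P' := by
    have := Set.image_mono (f := star) (subset_mulSpan_mulSpan_star_self hP)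
    rwa [star_image_mulSpan, star_image_mulSpan_star] at this
  calc mulSpan P' R
      ≤ mulSpan (mulSpan (mulSpan P' P : Set A) P' : Set A) R := mulSpan_mono hP' le_rfl
    _ = mulSpan (mulSpan Q' Q : Set A) (mulSpan P' R : Set A) := by rw [mulSpan_assoc, hPQ]
    _ = mulSpan Q' (mulSpan Q (mulSpan P' R : Set A) : Set A) := mulSpan_assoc _ _ _
    _ ≤ mulSpan Q' S := by
      refine mulSpan_mono le_rfl (mulSpan_mulSpan_le hS ?_)
      rintro q hq _ ⟨p, hp, rfl⟩ x hx
      exact hQ q hq p hp x hx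

end CStarAlgebra

/-- If `(X t)` is a strongly full concrete right Hilbert `(B t)`-bundle
(`X t* ⋅ X t = B t* ⋅ B t` for all `t`), then `X r* ⋅ X s = B r* ⋅ B s` for all `r, s`. -/
theorem starMulSpan_eq_of_stronglyFull
    {G L : Type*} [Group G] [NormedRing L] [StarRing L] [CStarRing L]
    [NormedAlgebra ℂ L] [StarModule ℂ L] [CompleteSpace L]
    (B : G → Submodule ℂ L)
    (hBclosed : ∀ t : G, IsClosed (B t : Set L))
    (hBmul : ∀ r s : G, ∀ b ∈ B r, ∀ c ∈ B s, b * c ∈ B (r * s))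
    (hBstar : ∀ t : G, ∀ b ∈ B t, star b ∈ B t⁻¹)
    (X : G → Submodule ℂ L)
    (hXclosed : ∀ t : G, IsClosed (X t : Set L))
    (hXact : ∀ r s : G, ∀ x ∈ X r, ∀ b ∈ B s, x * b ∈ X (r * s))
    (hXinner : ∀ r s : G, ∀ x ∈ X r, ∀ y ∈ X s, star x * y ∈ B (r⁻¹ * s))
    (hsfull : ∀ t : G,
      mulSpan (star '' (X t : Set L)) (X t : Set L)
        = mulSpan (star '' (B t : Set L)) (B t : Set L)) :
    ∀ r s : G,
      mulSpan (star '' (X r : Set L)) (X s : Set L)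
        = mulSpan (star '' (B r : Set L)) (B s : Set L) := by
  let : CStarAlgebra L := {}
  intro r s
  have hXtern : ∀ x ∈ X r, ∀ y ∈ X r, ∀ z ∈ X r, x * (star y * z) ∈ X r := by
    intro x hx y hy z hz
    simpa using hXact r _ x hx _ (hXinner r r y hy z hz)
  have hBtern : ∀ x ∈ B s, ∀ y ∈ B s, ∀ z ∈ B s, x * (star y * z) ∈ B s := by
    intro x hx y hy z hz
    simpa using hBmul s _ x hx _ (hBmul _ s _ (hBstar s y hy) z hz)
  refine le_antisymm (mulSpan_star_le_mulSpan_star (hBclosed s) hXtern (hsfull r) ?_) ?_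
  · intro b hb x hx y hy
    simpa using hBmul r _ b hb _ (hXinner r s x hx y hy)
  · have h := mulSpan_star_le_mulSpan_star (hXclosed r) hBtern (hsfull s).symm
      fun x hx c hc b hb => by simpa using hXact s _ x hx _ (hBmul _ r _ (hBstar s c hc) b hb)
    have := Set.image_mono (f := star) (SetLike.coe_subset_coe.mpr h)
    rwa [star_image_mulSpan_star, star_image_mulSpan_star, SetLike.coe_subset_coe] at this
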